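/- arXiv:1807.08591 — 2 statements merged into one kernel-verified Lean document; each statement's English description precedes it below -/
import Mathlib

section
/- Let A ∈ ℂ^{n×n} be positive definite, let K ∈ ℂ^{n×m} with ‖K‖ < 1, and define S_+ := [[A, −AK],[K*A, −K*AK]] ∈ ℂ^{(n+m)×(n+m)} and C := (I − KK*)^{1/2} A (I − KK*)^{1/2} ∈ ℂ^{n×n}. Equip ℂ^{n+m} with the indefinite inner product [x, y] := Σ_{i=1}^{n} x_i·conj(y_i) − Σ_{j=1}^{m} x_{n+j}·conj(y_{n+j}). Then for every f ∈ ℂ^{n}, setting g := (f, K*f) ∈ ℂ^{n+m} and h := (I − KK*)^{1/2} f ∈ ℂ^{n}, one has [S_+ g, g] = ⟨C h, h⟩ and [g, g] = ‖h‖²; in particular [S_+ g, g] > 0 for all f ≠ 0, and the set of values [S_+ g, g]/[g, g] over f ≠ 0 coincides with the numerical range of the positive definite matrix C. -/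
open scoped Matrix ComplexOrder

/-- The positive semidefinite square root of a positive semidefinite matrix
(removed from Mathlib; restored here with its old definition). -/
noncomputable def Matrix.PosSemidef.sqrt {n : Type*} [Fintype n] [DecidableEq n] {𝕜 : Type*} [RCLike 𝕜]
    {A : Matrix n n 𝕜} (hA : A.PosSemidef) : Matrix n n 𝕜 :=
  hA.1.eigenvectorUnitary.1 * Matrix.diagonal ((↑) ∘ (√·) ∘ hA.1.eigenvalues) *
  (star hA.1.eigenvectorUnitary : Matrix n n 𝕜)

/-- The spectral (operator) norm of a complex rectangular matrix. -/
noncomputable def specNorm {n m : ℕ} (K : Matrix (Fin n) (Fin m) ℂ) : ℝ :=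
  ‖LinearMap.toContinuousLinearMap (Matrix.toEuclideanLin K)‖

/-- The standard indefinite inner product `[x,y] = ∑_{i<n} xᵢ·conj(yᵢ) − ∑_{j<m} x_{n+j}·conj(y_{n+j})`
on `ℂ^{n+m} = ℂ^n × ℂ^m`. -/
noncomputable def jip {n m : ℕ} (x y : (Fin n ⊕ Fin m) → ℂ) : ℂ :=
  ∑ i : Fin n, x (Sum.inl i) * (starRingEnd ℂ) (y (Sum.inl i)) -
  ∑ j : Fin m, x (Sum.inr j) * (starRingEnd ℂ) (y (Sum.inr j))

/-- The standard inner product on `ℂ^n`. -/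
noncomputable def ip {n : ℕ} (x y : Fin n → ℂ) : ℂ :=
  ∑ i : Fin n, x i * (starRingEnd ℂ) (y i)

/-!
With `Q = I - KKᴴ`, the block matrix `S₊` maps a vector `(u, Kᴴu)` of the graph of `Kᴴ` to
`(AQu, Kᴴ(AQu))`, again in that graph, and on the graph the indefinite form is
`[(u, Kᴴu), (v, Kᴴv)] = ⟨Qu, v⟩`. Hence `[S₊g, g] = ⟨AQf, Qf⟩` and `[g, g] = ⟨Qf, f⟩`, which are
`⟨Ch, h⟩` and `‖h‖²` for `h = Q^{1/2} f`. Since `‖K‖ < 1`, `Q` is positive definite, so `Qf ≠ 0`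
for `f ≠ 0` and `f ↦ Q^{1/2} f` is a bijection of the nonzero vectors.
-/

open Matrix

namespace Matrix

section Sqrt

variable {ι : Type*} [Fintype ι] [DecidableEq ι] {𝕜 : Type*} [RCLike 𝕜] {A : Matrix ι ι 𝕜}

lemma PosSemidef.sqrt_eq_cfc (hA : A.PosSemidef) : hA.sqrt = cfc Real.sqrt A := by
  rw [hA.1.cfc_eq]
  rfl

lemma PosSemidef.isHermitian_sqrt (hA : A.PosSemidef) : hA.sqrt.IsHermitian :=
  hA.sqrt_eq_cfc ▸ cfc_predicate Real.sqrt A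

lemma PosSemidef.sqrt_mul_self (hA : A.PosSemidef) : hA.sqrt * hA.sqrt = A := by
  rw [hA.sqrt_eq_cfc, ← cfc_mul Real.sqrt Real.sqrt A]
  conv_rhs => rw [← cfc_id ℝ A hA.1]
  refine cfc_congr fun x hx => Real.mul_self_sqrt ?_
  obtain ⟨i, rfl⟩ := hA.1.spectrum_real_eq_range_eigenvalues ▸ hx
  exact hA.eigenvalues_nonneg i

end Sqrt

section DotProduct

variable {ι κ α : Type*} [Fintype ι] [Fintype κ] [CommSemiring α] [StarRing α]

lemma star_dotProduct_mulVec (M : Matrix ι κ α) (x : ι → α) (y : κ → α) :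
    star x ⬝ᵥ (M *ᵥ y) = star (Mᴴ *ᵥ x) ⬝ᵥ y := by
  rw [star_mulVec, conjTranspose_conjTranspose, dotProduct_mulVec]

lemma IsHermitian.star_mulVec_dotProduct {M : Matrix ι ι α} (hM : M.IsHermitian) (x y : ι → α) :
    star (M *ᵥ x) ⬝ᵥ y = star x ⬝ᵥ (M *ᵥ y) := by
  rw [star_dotProduct_mulVec, hM.eq]

end DotProduct

lemma fromBlocks_mulVec_sumElim_conjTranspose_mulVec {ι κ α : Type*} [Fintype ι] [Fintype κ]
    [DecidableEq ι] [CommRing α] [StarRing α] (A : Matrix ι ι α) (K : Matrix ι κ α) (f : ι → α) :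
    fromBlocks A (-(A * K)) (Kᴴ * A) (-(Kᴴ * A * K)) *ᵥ Sum.elim f (Kᴴ *ᵥ f) =
      Sum.elim (A *ᵥ ((1 - K * Kᴴ) *ᵥ f)) (Kᴴ *ᵥ (A *ᵥ ((1 - K * Kᴴ) *ᵥ f))) := by
  simp only [fromBlocks_mulVec, Sum.elim_comp_inl, Sum.elim_comp_inr, mulVec_mulVec, ← add_mulVec,
    Matrix.mul_sub, Matrix.mul_one, Matrix.neg_mul, Matrix.mul_assoc]
  congr 2 <;> abel

lemma star_dotProduct_self_eq_norm_sq {ι 𝕜 : Type*} [Fintype ι] [RCLike 𝕜] (x : ι → 𝕜) :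
    star x ⬝ᵥ x = ((‖WithLp.toLp 2 x‖ ^ 2 : ℝ) : 𝕜) := by
  rw [dotProduct_comm, ← EuclideanSpace.inner_toLp_toLp, inner_self_eq_norm_sq_to_K, RCLike.ofReal_pow]

lemma isHermitian_one_sub_mul_conjTranspose {ι κ α : Type*} [Fintype κ] [DecidableEq ι]
    [CommRing α] [StarRing α] {K : Matrix ι κ α} : (1 - K * Kᴴ).IsHermitian :=
  isHermitian_one.sub (isHermitian_mul_conjTranspose_self K)

lemma mulVec_ne_zero_of_isUnit {ι K : Type*} [Fintype ι] [DecidableEq ι] [Field K]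
    {M : Matrix ι ι K} (hM : IsUnit M) {x : ι → K} (hx : x ≠ 0) : M *ᵥ x ≠ 0 := by
  simpa using (mulVec_injective_iff_isUnit.2 hM).ne hx

end Matrix

section Graph

variable {n m : ℕ}

open scoped Matrix.Norms.L2Operator in
lemma norm_conjTranspose_mulVec_le (K : Matrix (Fin n) (Fin m) ℂ) (x : Fin n → ℂ) :
    ‖WithLp.toLp 2 (Kᴴ *ᵥ x)‖ ≤ specNorm K * ‖WithLp.toLp 2 x‖ := by
  have := l2_opNorm_mulVec Kᴴ (WithLp.toLp 2 x)
  rwa [l2_opNorm_conjTranspose] at this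

lemma posDef_one_sub_mul_conjTranspose (K : Matrix (Fin n) (Fin m) ℂ) (hK : specNorm K < 1) :
    (1 - K * Kᴴ).PosDef := by
  refine .of_dotProduct_mulVec_pos isHermitian_one_sub_mul_conjTranspose fun x hx => ?_
  have hx : 0 < ‖WithLp.toLp 2 x‖ := by simpa using hx
  have hKx := norm_conjTranspose_mulVec_le K x
  rw [sub_mulVec, one_mulVec, ← mulVec_mulVec, dotProduct_sub, star_dotProduct_mulVec,
    star_dotProduct_self_eq_norm_sq, star_dotProduct_self_eq_norm_sq, ← RCLike.ofReal_sub]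
  have : specNorm K * ‖WithLp.toLp 2 x‖ < ‖WithLp.toLp 2 x‖ := by nlinarith
  exact Complex.zero_lt_real.2 <| sub_pos.2 <|
    pow_lt_pow_left₀ (hKx.trans_lt this) (norm_nonneg _) two_ne_zero

lemma jip_sumElim (a c : Fin n → ℂ) (b d : Fin m → ℂ) :
    jip (Sum.elim a b) (Sum.elim c d) = star c ⬝ᵥ a - star d ⬝ᵥ b := by
  simp only [jip, Sum.elim_inl, Sum.elim_inr, dotProduct, Pi.star_apply, RCLike.star_def, mul_comm]

lemma ip_eq_star_dotProduct (x y : Fin n → ℂ) : ip x y = star y ⬝ᵥ x := by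
  simp only [ip, dotProduct, Pi.star_apply, RCLike.star_def, mul_comm]

lemma jip_sumElim_conjTranspose_mulVec (K : Matrix (Fin n) (Fin m) ℂ) (u v : Fin n → ℂ) :
    jip (Sum.elim u (Kᴴ *ᵥ u)) (Sum.elim v (Kᴴ *ᵥ v)) = star v ⬝ᵥ ((1 - K * Kᴴ) *ᵥ u) := by
  rw [jip_sumElim, ← star_dotProduct_mulVec, mulVec_mulVec, sub_mulVec, one_mulVec, dotProduct_sub]

lemma jip_fromBlocks_mulVec_sumElim (A : Matrix (Fin n) (Fin n) ℂ) (K : Matrix (Fin n) (Fin m) ℂ)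
    (f : Fin n → ℂ) :
    jip (fromBlocks A (-(A * K)) (Kᴴ * A) (-(Kᴴ * A * K)) *ᵥ Sum.elim f (Kᴴ *ᵥ f))
        (Sum.elim f (Kᴴ *ᵥ f)) =
      star ((1 - K * Kᴴ) *ᵥ f) ⬝ᵥ (A *ᵥ ((1 - K * Kᴴ) *ᵥ f)) := by
  rw [fromBlocks_mulVec_sumElim_conjTranspose_mulVec, jip_sumElim_conjTranspose_mulVec,
    isHermitian_one_sub_mul_conjTranspose.star_mulVec_dotProduct]

end Graph

/-- Let `A ∈ ℂ^{n×n}` be positive definite, `K ∈ ℂ^{n×m}` with `‖K‖ < 1`, and set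
`S₊ = [[A, −AK],[KᴴA, −KᴴAK]]` and `C = (I − KKᴴ)^{1/2} A (I − KKᴴ)^{1/2}`.  For
`f ∈ ℂ^n` put `g = (f, Kᴴf)` and `h = (I − KKᴴ)^{1/2} f`.  Then `[S₊g, g] = ⟨Ch, h⟩` and
`[g, g] = ‖h‖²`; in particular `[S₊g, g] > 0` for `f ≠ 0`, and the values `[S₊g, g]/[g, g]`
over `f ≠ 0` are exactly the values `⟨Ch, h⟩/⟨h, h⟩` over `h ≠ 0` (the numerical range of
the positive definite matrix `C`). -/
theorem Splus_numericalRange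
    (n m : ℕ)
    (A : Matrix (Fin n) (Fin n) ℂ) (hA : A.PosDef)
    (K : Matrix (Fin n) (Fin m) ℂ) (hK : specNorm K < 1)
    (h1 : (1 - K * Kᴴ).PosSemidef)
    (C : Matrix (Fin n) (Fin n) ℂ) (hC : C = h1.sqrt * A * h1.sqrt)
    (Splus : Matrix (Fin n ⊕ Fin m) (Fin n ⊕ Fin m) ℂ)
    (hS : Splus = Matrix.fromBlocks A (-(A * K)) (Kᴴ * A) (-(Kᴴ * A * K))) :
    (∀ f : Fin n → ℂ,
      jip (Splus.mulVec (Sum.elim f (Kᴴ.mulVec f))) (Sum.elim f (Kᴴ.mulVec f)) =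
        ip (C.mulVec (h1.sqrt.mulVec f)) (h1.sqrt.mulVec f) ∧
      jip (Sum.elim f (Kᴴ.mulVec f)) (Sum.elim f (Kᴴ.mulVec f)) =
        ip (h1.sqrt.mulVec f) (h1.sqrt.mulVec f) ∧
      (f ≠ 0 →
        0 < (jip (Splus.mulVec (Sum.elim f (Kᴴ.mulVec f))) (Sum.elim f (Kᴴ.mulVec f))).re ∧
        (jip (Splus.mulVec (Sum.elim f (Kᴴ.mulVec f))) (Sum.elim f (Kᴴ.mulVec f))).im = 0)) ∧
    {z : ℂ | ∃ f : Fin n → ℂ, f ≠ 0 ∧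
        z = jip (Splus.mulVec (Sum.elim f (Kᴴ.mulVec f))) (Sum.elim f (Kᴴ.mulVec f)) /
              jip (Sum.elim f (Kᴴ.mulVec f)) (Sum.elim f (Kᴴ.mulVec f))} =
    {z : ℂ | ∃ h : Fin n → ℂ, h ≠ 0 ∧ z = ip (C.mulVec h) h / ip h h} := by
  subst hS hC
  set Q := 1 - K * Kᴴ
  set R := h1.sqrt
  have hQ : Q.PosDef := posDef_one_sub_mul_conjTranspose K hK
  have hR : R.IsHermitian := h1.isHermitian_sqrt
  have hRR : R * R = Q := h1.sqrt_mul_self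
  have hR_unit : IsUnit R := isUnit_of_mul_isUnit_left (hRR ▸ hQ.isUnit)
  have hC_form : ∀ f : Fin n → ℂ,
      ip ((R * A * R) *ᵥ (R *ᵥ f)) (R *ᵥ f) = star (Q *ᵥ f) ⬝ᵥ (A *ᵥ (Q *ᵥ f)) := fun f => by
    rw [ip_eq_star_dotProduct, hR.star_mulVec_dotProduct, hQ.isHermitian.star_mulVec_dotProduct,
      ← hRR]
    simp only [mulVec_mulVec, Matrix.mul_assoc]
  have hS_eq (f : Fin n → ℂ) := (jip_fromBlocks_mulVec_sumElim A K f).trans (hC_form f).symm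
  have hJ_eq : ∀ f : Fin n → ℂ,
      jip (Sum.elim f (Kᴴ *ᵥ f)) (Sum.elim f (Kᴴ *ᵥ f)) = ip (R *ᵥ f) (R *ᵥ f) := fun f => by
    rw [jip_sumElim_conjTranspose_mulVec, ip_eq_star_dotProduct, hR.star_mulVec_dotProduct,
      mulVec_mulVec, hRR]
  refine ⟨fun f => ⟨hS_eq f, hJ_eq f, fun hf => ?_⟩, ?_⟩
  · rw [jip_fromBlocks_mulVec_sumElim]
    exact (Complex.pos_iff.1 <| hA.dotProduct_mulVec_pos <|
      mulVec_ne_zero_of_isUnit hQ.isUnit hf).imp id Eq.symm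
  · ext z
    constructor
    · rintro ⟨f, hf, rfl⟩
      exact ⟨R *ᵥ f, mulVec_ne_zero_of_isUnit hR_unit hf, by rw [hS_eq, hJ_eq]⟩
    · rintro ⟨h, hh, rfl⟩
      obtain ⟨f, rfl⟩ := mulVec_surjective_iff_isUnit.2 hR_unit h
      exact ⟨f, by rintro rfl; simp at hh, by rw [hS_eq, hJ_eq]⟩
end

section
/- Let A ∈ ℂ^{n×n} be a positive semidefinite Hermitian matrix with eigenvalues λ_1 ≥ … ≥ λ_k > 0 = λ_{k+1} = … = λ_n and let D ∈ ℂ^{m×m} be Hermitian with eigenvalues μ_1 ≤ … ≤ μ_r ≤ 0 < μ_{r+1} ≤ … ≤ μ_m, with p = dim ker D. Let 0 < κ ≤ 1 and assume r − p ≤ k and κ²λ_i + μ_i ≥ 0 for i = 1,…,r−p. For i = 1,…,r−p choose ε_i with −μ_i/λ_i ≤ ε_i ≤ κ², set ε_j = 0 for j = r−p+1,…,r, and define K := U E V* with U, V unitary satisfying A = U·diag(λ_1,…,λ_n)·U*, D = V·diag(μ_1,…,μ_m)·V*, and E ∈ ℂ^{n×m} having (i,i)-entry √ε_i for i ≤ r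 and zeros elsewhere. Then λ_i + μ_i ≥ 0 for i = 1,…,r−p and every eigenvalue η ∈ ℂ of S = [[A, −AK],[K*A, D]] satisfies Re(η) ≥ 0, i.e., the spectrum of S is contained in the closed complex right half-plane. -/
open scoped Matrix ComplexOrder

/-!
Conjugating by the block unitary `diag(U, V)` turns `S` into the model matrix
`[[Λ, -ΛE], [EᴴΛ, Ω]]` with `Λ`, `Ω` real diagonal and `E` "diagonal" with entries `sᵢ = √εᵢ`.
In the model, coordinate `i` of the first block only interacts with coordinate `i` of the second,
so an eigenvector splits into eigenvectors of real `2 × 2` blocks `[[λᵢ, -λᵢsᵢ], [sᵢλᵢ, μᵢ]]`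
(or of `1 × 1` blocks `λᵢ`, `μⱼ`). Each block has nonnegative trace `λᵢ + μᵢ` and determinant
`λᵢ(μᵢ + εᵢλᵢ)`, hence its eigenvalues lie in the closed right half-plane. The uncoupled `μⱼ` are
nonnegative since a rank count puts the `p` zero eigenvalues of `D` in the last `p` slots below `r`.
-/

lemma Complex.eq_zero_of_ofReal_mul_eq_mul {c : ℝ} {η u : ℂ} (hη : η.re < 0) (hc : 0 ≤ c)
    (h : c * u = η * u) : u = 0 := by
  refine (mul_eq_zero.mp (?_ : ((c : ℂ) - η) * u = 0)).resolve_left fun hcη => ?_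
  · linear_combination h
  · rw [sub_eq_zero] at hcη
    have := congrArg Complex.re hcη
    simp only [Complex.ofReal_re] at this
    linarith

lemma Complex.re_nonneg_of_sub_mul_sub_add_eq_zero {a b c : ℝ} {η : ℂ} (htr : 0 ≤ a + b)
    (hdet : 0 ≤ a * b + c) (h : (a - η) * (b - η) + c = 0) : 0 ≤ η.re := by
  obtain ⟨hre, him⟩ := Complex.ext_iff.mp h
  simp only [Complex.add_re, Complex.add_im, Complex.mul_re, Complex.mul_im, Complex.sub_re,
    Complex.sub_im, Complex.ofReal_re, Complex.ofReal_im, Complex.zero_re, Complex.zero_im] at hre him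
  -- either `η` is real or `2 η.re` is the trace
  have : η.im * (a + b - 2 * η.re) = 0 := by linear_combination -him
  rcases mul_eq_zero.mp this with him0 | hmid
  · by_contra! hneg
    rw [him0] at hre
    nlinarith
  · linarith

lemma eq_zero_of_eigen_real_two_by_two {a b c d : ℝ} {η u v : ℂ} (hη : η.re < 0)
    (htr : 0 ≤ a + d) (hdet : 0 ≤ a * d - b * c)
    (hu : a * u + b * v = η * u) (hv : c * u + d * v = η * v) : u = 0 ∧ v = 0 := by
  have hq : ((a : ℂ) - η) * (d - η) + ((-(b * c) : ℝ) : ℂ) ≠ 0 := fun h =>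
    hη.not_ge (Complex.re_nonneg_of_sub_mul_sub_add_eq_zero htr (by linarith) h)
  push_cast at hq
  constructor
  · refine (mul_eq_zero.mp ?_).resolve_left hq
    linear_combination (d - η) * hu - b * hv
  · refine (mul_eq_zero.mp ?_).resolve_left hq
    linear_combination (a - η) * hv - c * hu

lemma mul_add_sq_sqrt_mul_nonneg {lam mu eps : ℝ} (hlam : 0 < lam) (hmu : mu ≤ 0)
    (heps : -mu / lam ≤ eps) : 0 ≤ lam * mu + (√eps * lam) ^ 2 := by
  have heps0 : 0 ≤ eps := (div_nonneg (neg_nonneg.mpr hmu) hlam.le).trans heps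
  have heps' : -mu ≤ eps * lam := (div_le_iff₀ hlam).mp heps
  calc 0 ≤ lam * (mu + eps * lam) := mul_nonneg hlam.le (by linarith)
    _ = lam * mu + (√eps * lam) ^ 2 := by rw [mul_pow, Real.sq_sqrt heps0]; ring

lemma nonneg_of_sub_card_zeros_le {m r : ℕ} {mu : ℕ → ℝ}
    (hmono : ∀ i j : ℕ, i ≤ j → j < m → mu i ≤ mu j) (hpos : ∀ i, r ≤ i → i < m → 0 < mu i)
    {j : ℕ} (hjm : j < m) (hj : r - Fintype.card {i : Fin m // mu i = 0} ≤ j) : 0 ≤ mu j := by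
  rcases le_or_gt r j with hjr | hjr
  · exact (hpos j hjr hjm).le
  by_contra! hneg
  -- by monotonicity all zeros of `mu` then lie strictly between `j` and `r`: too few of them
  have hzeros : Fintype.card {i : Fin m // mu i = 0} ≤ (Finset.Ico (j + 1) r).card := by
    classical
    rw [Fintype.card_subtype]
    refine Finset.card_le_card_of_injOn Fin.val (fun i hi => ?_) Fin.val_injective.injOn
    have hi : mu i = 0 := (Finset.mem_filter.mp hi).2
    refine Finset.mem_Ico.mpr ⟨?_, ?_⟩
    · by_contra! hij
      linarith [hmono i j (Nat.lt_succ_iff.mp hij) hjm]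
    · by_contra! hri
      linarith [hpos i hri i.isLt]
  rw [Nat.card_Ico] at hzeros
  omega

def Fin.extendByZero {α : Type*} [Zero α] {n : ℕ} (u : Fin n → α) (i : ℕ) : α :=
  if h : i < n then u ⟨i, h⟩ else 0

lemma Fin.extendByZero_val {α : Type*} [Zero α] {n : ℕ} (u : Fin n → α) (i : Fin n) :
    Fin.extendByZero u i = u i := by
  simp [Fin.extendByZero]

namespace Matrix

lemma spectrum_fromBlocks_unitary_conj {R l o : Type*} [CommRing R] [StarRing R]
    [Fintype l] [Fintype o] [DecidableEq l] [DecidableEq o]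
    {U : Matrix l l R} {V : Matrix o o R} (hU : U ∈ unitaryGroup l R) (hV : V ∈ unitaryGroup o R)
    (a : Matrix l l R) (b : Matrix l o R) (c : Matrix o l R) (d : Matrix o o R) :
    spectrum R (fromBlocks (U * a * Uᴴ) (U * b * Vᴴ) (V * c * Uᴴ) (V * d * Vᴴ))
      = spectrum R (fromBlocks a b c d) := by
  have hW : fromBlocks U 0 0 V ∈ unitaryGroup (l ⊕ o) R := by
    rw [mem_unitaryGroup_iff, star_eq_conjTranspose, fromBlocks_conjTranspose,
      fromBlocks_multiply]
    rw [mem_unitaryGroup_iff, star_eq_conjTranspose] at hU hV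
    simp [hU, hV]
  have hconj : fromBlocks (U * a * Uᴴ) (U * b * Vᴴ) (V * c * Uᴴ) (V * d * Vᴴ)
      = fromBlocks U 0 0 V * fromBlocks a b c d * star (fromBlocks U 0 0 V) := by
    simp [star_eq_conjTranspose, fromBlocks_conjTranspose, fromBlocks_multiply, Matrix.mul_assoc]
  rw [hconj]
  exact Unitary.spectrum_star_right_conjugate (U := ⟨_, hW⟩)

lemma spectrum_fromBlocks_neg_mul_unitary_conj {R l o : Type*} [CommRing R] [StarRing R]
    [Fintype l] [Fintype o] [DecidableEq l] [DecidableEq o]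
    {U : Matrix l l R} {V : Matrix o o R} (hU : U ∈ unitaryGroup l R) (hV : V ∈ unitaryGroup o R)
    (a : Matrix l l R) (e : Matrix l o R) (d : Matrix o o R) :
    spectrum R (fromBlocks (U * a * Uᴴ) (-(U * a * Uᴴ * (U * e * Vᴴ)))
        ((U * e * Vᴴ)ᴴ * (U * a * Uᴴ)) (V * d * Vᴴ))
      = spectrum R (fromBlocks a (-(a * e)) (eᴴ * a) d) := by
  have hUU : Uᴴ * U = 1 := by simpa [star_eq_conjTranspose] using mem_unitaryGroup_iff'.mp hU
  convert spectrum_fromBlocks_unitary_conj hU hV a (-(a * e)) (eᴴ * a) d using 3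
  · simp only [Matrix.mul_assoc, Matrix.mul_neg, Matrix.neg_mul]
    rw [← Matrix.mul_assoc Uᴴ U, hUU, Matrix.one_mul]
  · simp only [conjTranspose_mul, conjTranspose_conjTranspose, Matrix.mul_assoc]
    rw [← Matrix.mul_assoc Uᴴ U, hUU, Matrix.one_mul]

lemma finrank_ker_mulVecLin_mul_diagonal_mul {K ι : Type*} [Field K] [DecidableEq K]
    [Fintype ι] [DecidableEq ι] {V W : Matrix ι ι K} (hV : IsUnit V.det) (hW : IsUnit W.det) (d : ι → K) :
    Module.finrank K (LinearMap.ker (V * diagonal d * W).mulVecLin)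
      = Fintype.card {i // d i = 0} := by
  have hrank : (V * diagonal d * W).rank = Fintype.card {i // d i ≠ 0} := by
    rw [rank_mul_eq_left_of_isUnit_det W _ hW, rank_mul_eq_right_of_isUnit_det V _ hV,
      rank_diagonal]
  have hnullity := LinearMap.finrank_range_add_finrank_ker (V * diagonal d * W).mulVecLin
  rw [Module.finrank_fintype_fun_eq_card] at hnullity
  have hcompl : Fintype.card {i // d i ≠ 0} = Fintype.card ι - Fintype.card {i // d i = 0} := by
    convert Fintype.card_subtype_compl fun i => d i = 0
  have hle := Fintype.card_subtype_le fun i => d i = 0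
  change (V * diagonal d * W).rank + _ = _ at hnullity
  omega

lemma exists_mulVec_eq_smul_of_mem_spectrum {ι 𝕜 : Type*} [Fintype ι] [DecidableEq ι] [Field 𝕜]
    {T : Matrix ι ι 𝕜} {η : 𝕜} (hη : η ∈ spectrum 𝕜 T) : ∃ x ≠ 0, T *ᵥ x = η • x := by
  rw [← spectrum_toLin', ← Module.End.hasEigenvalue_iff_mem_spectrum] at hη
  obtain ⟨x, hx⟩ := hη.exists_hasEigenvector
  exact ⟨x, hx.2, hx.apply_eq_smul⟩

variable {n m : ℕ}

def rectDiagonal (s : ℕ → ℝ) : Matrix (Fin n) (Fin m) ℂ :=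
  Matrix.of fun i j => if (i : ℕ) = j then (s j : ℂ) else 0

@[simp]
lemma conjTranspose_rectDiagonal (s : ℕ → ℝ) :
    (rectDiagonal s : Matrix (Fin n) (Fin m) ℂ)ᴴ = rectDiagonal s := by
  ext i j
  simp only [rectDiagonal, conjTranspose_apply, of_apply]
  split_ifs with h h' h'
  · rw [h, Complex.star_def, Complex.conj_ofReal]
  · exact absurd h.symm h'
  · exact absurd h'.symm h
  · exact star_zero _

lemma rectDiagonal_mulVec (s : ℕ → ℝ) (v : Fin m → ℂ) (i : Fin n) :
    (rectDiagonal s *ᵥ v) i = s i * Fin.extendByZero v i := by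
  simp only [mulVec, dotProduct, rectDiagonal, of_apply, ite_mul, zero_mul, Fin.extendByZero]
  split_ifs with h
  · rw [Finset.sum_eq_single_of_mem ⟨i, h⟩ (Finset.mem_univ _)]
    · simp
    · intro j _ hj
      exact if_neg fun hij => hj (Fin.ext hij.symm)
  · simp only [mul_zero]
    exact Finset.sum_eq_zero fun j _ => if_neg fun (hij : (i : ℕ) = j) => h (hij ▸ j.isLt)

@[simp]
lemma diagonal_mul_rectDiagonal (d s : ℕ → ℝ) :
    diagonal (fun i : Fin n => (d i : ℂ)) * (rectDiagonal s : Matrix (Fin n) (Fin m) ℂ)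
      = rectDiagonal (d * s) := by
  ext i j
  simp only [diagonal_mul, rectDiagonal, of_apply, Pi.mul_apply, Complex.ofReal_mul]
  split_ifs with h <;> simp [h]

@[simp]
lemma rectDiagonal_mul_diagonal (s d : ℕ → ℝ) :
    (rectDiagonal s : Matrix (Fin n) (Fin m) ℂ) * diagonal (fun j : Fin m => (d j : ℂ))
      = rectDiagonal (s * d) := by
  ext i j
  simp only [mul_diagonal, rectDiagonal, of_apply, Pi.mul_apply, Complex.ofReal_mul]
  split_ifs <;> simp

end Matrix

open Matrix

theorem re_nonneg_of_mem_spectrum_fromBlocks_rectDiagonal {n m : ℕ} (lam mu s : ℕ → ℝ)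
    (hlam : ∀ i < n, 0 ≤ lam i) (hmu : ∀ j < m, n ≤ j → 0 ≤ mu j)
    (hpair : ∀ i < n, i < m → 0 ≤ lam i + mu i ∧ 0 ≤ lam i * mu i + (s i * lam i) ^ 2)
    {η : ℂ} (hη : η ∈ spectrum ℂ (fromBlocks (diagonal fun i : Fin n => (lam i : ℂ))
      (-(diagonal (fun i : Fin n => (lam i : ℂ)) * (rectDiagonal s : Matrix (Fin n) (Fin m) ℂ)))
      ((rectDiagonal s : Matrix (Fin n) (Fin m) ℂ)ᴴ * diagonal fun i : Fin n => (lam i : ℂ))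
      (diagonal fun j : Fin m => (mu j : ℂ)))) :
    0 ≤ η.re := by
  by_contra! hneg
  obtain ⟨x, hx0, hx⟩ := exists_mulVec_eq_smul_of_mem_spectrum hη
  set u := Fin.extendByZero (x ∘ Sum.inl)
  set v := Fin.extendByZero (x ∘ Sum.inr)
  rw [fromBlocks_mulVec] at hx
  have hrow (i : Fin n) : lam i * u i + (-(lam i * s i) : ℝ) * v i = η * u i := by
    have := congrFun hx (Sum.inl i)
    simp only [Pi.add_apply, mulVec_diagonal, neg_mulVec, diagonal_mul_rectDiagonal,
      Pi.neg_apply, rectDiagonal_mulVec, Pi.smul_apply, smul_eq_mul, Function.comp_apply,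
      Sum.elim_inl, Pi.mul_apply] at this
    simp only [u, v, Fin.extendByZero_val, Function.comp_apply]
    push_cast at this ⊢
    linear_combination this
  have hcol (j : Fin m) : (s j * lam j : ℝ) * u j + mu j * v j = η * v j := by
    have := congrFun hx (Sum.inr j)
    simp only [Pi.add_apply, mulVec_diagonal, conjTranspose_rectDiagonal, rectDiagonal_mul_diagonal,
      rectDiagonal_mulVec, Pi.smul_apply, smul_eq_mul, Function.comp_apply,
      Sum.elim_inr, Pi.mul_apply] at this
    simp only [u, v, Fin.extendByZero_val, Function.comp_apply]
    push_cast at this ⊢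
    linear_combination this
  have hzero (i : ℕ) : u i = 0 ∧ v i = 0 := by
    have hu (hn : ¬i < n) : u i = 0 := dif_neg hn
    have hv (hm : ¬i < m) : v i = 0 := dif_neg hm
    by_cases hn : i < n <;> by_cases hm : i < m
    · obtain ⟨htr, hdet⟩ := hpair i hn hm
      exact eq_zero_of_eigen_real_two_by_two hneg htr (by linarith) (hrow ⟨i, hn⟩) (hcol ⟨i, hm⟩)
    · refine ⟨Complex.eq_zero_of_ofReal_mul_eq_mul hneg (hlam i hn) ?_, hv hm⟩
      simpa [hv hm] using hrow ⟨i, hn⟩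
    · refine ⟨hu hn, Complex.eq_zero_of_ofReal_mul_eq_mul hneg (hmu i hm (not_lt.mp hn)) ?_⟩
      simpa [hu hn] using hcol ⟨i, hm⟩
    · exact ⟨hu hn, hv hm⟩
  refine hx0 (funext fun z => ?_)
  rcases z with i | j
  · simpa [u, Fin.extendByZero_val] using (hzero i).1
  · simpa [v, Fin.extendByZero_val] using (hzero j).2

theorem spectrum_in_right_halfplane_general
    (n m k r p : ℕ) (hkn : k ≤ n)
    (κ : ℝ) (hκ0 : 0 < κ) (hκ1 : κ ≤ 1)
    (lam mu eps : ℕ → ℝ)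
    (hlampos : ∀ i : ℕ, i < k → 0 < lam i)
    (hlamzero : ∀ i : ℕ, k ≤ i → i < n → lam i = 0)
    (hmu : ∀ i j : ℕ, i ≤ j → j < m → mu i ≤ mu j)
    (hmunonpos : ∀ i : ℕ, i < r → mu i ≤ 0)
    (hmupos : ∀ i : ℕ, r ≤ i → i < m → 0 < mu i)
    (D : Matrix (Fin m) (Fin m) ℂ)
    (hp : p = Module.finrank ℂ (LinearMap.ker D.mulVecLin))
    (hrpk : r - p ≤ k)
    (hcond : ∀ i : ℕ, i < r - p → 0 ≤ κ ^ 2 * lam i + mu i)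
    (hepsl : ∀ i : ℕ, i < r - p → -mu i / lam i ≤ eps i)
    (hepsz : ∀ j : ℕ, r - p ≤ j → j < r → eps j = 0)
    (U : Matrix (Fin n) (Fin n) ℂ) (hU : U ∈ Matrix.unitaryGroup (Fin n) ℂ)
    (V : Matrix (Fin m) (Fin m) ℂ) (hV : V ∈ Matrix.unitaryGroup (Fin m) ℂ)
    (A : Matrix (Fin n) (Fin n) ℂ)
    (hA : A = U * Matrix.diagonal (fun i : Fin n => (lam i : ℂ)) * Uᴴ)
    (hD : D = V * Matrix.diagonal (fun j : Fin m => (mu j : ℂ)) * Vᴴ)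
    (E : Matrix (Fin n) (Fin m) ℂ)
    (hE : ∀ (i : Fin n) (j : Fin m),
      E i j = if (i : ℕ) = (j : ℕ) ∧ (j : ℕ) < r then (Real.sqrt (eps j) : ℂ) else 0)
    (K : Matrix (Fin n) (Fin m) ℂ) (hK : K = U * E * Vᴴ)
    (S : Matrix (Fin n ⊕ Fin m) (Fin n ⊕ Fin m) ℂ)
    (hS : S = Matrix.fromBlocks A (-(A * K)) (Kᴴ * A) D) :
    (∀ i : ℕ, i < r - p → 0 ≤ lam i + mu i) ∧
    ∀ η ∈ spectrum ℂ S, 0 ≤ η.re := by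
  have hsum : ∀ i < r - p, 0 ≤ lam i + mu i := fun i hi => by
    have hκ : κ ^ 2 ≤ 1 := pow_le_one₀ hκ0.le hκ1
    nlinarith [hcond i hi, hlampos i (hi.trans_le hrpk)]
  refine ⟨hsum, fun η hη => ?_⟩
  have hlam0 : ∀ i < n, 0 ≤ lam i := fun i hi =>
    (lt_or_ge i k).elim (fun hik => (hlampos i hik).le) fun hik => (hlamzero i hik hi).ge
  have hVdet : IsUnit V.det := UnitaryGroup.det_isUnit ⟨V, hV⟩
  have hp_card : p = Fintype.card {j : Fin m // mu j = 0} := by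
    rw [hp, hD, finrank_ker_mulVecLin_mul_diagonal_mul hVdet (by simpa using hVdet.star)]
    exact Fintype.card_congr (Equiv.subtypeEquivRight fun _ => Complex.ofReal_eq_zero)
  have hmu0 : ∀ j < m, r - p ≤ j → 0 ≤ mu j := fun j hjm hj =>
    nonneg_of_sub_card_zeros_le hmu hmupos hjm (hp_card ▸ hj)
  set s : ℕ → ℝ := fun i => if i < r - p then √(eps i) else 0 with hs
  have hEs : E = rectDiagonal s := by
    ext i j
    simp only [hE, rectDiagonal, of_apply, hs]
    split_ifs with hij hij' hj hj <;> first | rfl | omega | simp [hepsz j (by omega) hij.2]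
  rw [hS, hA, hD, hK, hEs, spectrum_fromBlocks_neg_mul_unitary_conj hU hV] at hη
  refine re_nonneg_of_mem_spectrum_fromBlocks_rectDiagonal lam mu s hlam0
    (fun j hjm hnj => hmu0 j hjm (by omega)) (fun i hin him => ?_) hη
  rcases lt_or_ge i (r - p) with hi | hi
  · refine ⟨hsum i hi, ?_⟩
    simpa only [hs, if_pos hi] using mul_add_sq_sqrt_mul_nonneg (hlampos i (hi.trans_le hrpk))
      (hmunonpos i (hi.trans_le (Nat.sub_le r p))) (hepsl i hi)
  · have hlami := hlam0 i hin
    have hmui := hmu0 i him hi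
    simpa [hs, hi.not_gt] using ⟨add_nonneg hlami hmui, mul_nonneg hlami hmui⟩

/-- If `A` is positive semidefinite, `0 < κ ≤ 1` and the parameters satisfy
`−mu i/lam i ≤ ε i ≤ κ²` for `i < r − p` (and `ε j = 0` for `r − p ≤ j < r`), then
`lam i + mu i ≥ 0` for `i < r − p` and the spectrum of `S = [[A, −AK],[KᴴA, D]]` is
contained in the closed right half-plane. -/
theorem spectrum_in_right_halfplane
    (n m k r p : ℕ) (hkn : k ≤ n) (hrm : r ≤ m) (hpr : p ≤ r)
    (κ : ℝ) (hκ0 : 0 < κ) (hκ1 : κ ≤ 1)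
    (lam mu eps : ℕ → ℝ)
    (hlam : ∀ i j : ℕ, i ≤ j → j < n → lam j ≤ lam i)
    (hlampos : ∀ i : ℕ, i < k → 0 < lam i)
    (hlamzero : ∀ i : ℕ, k ≤ i → i < n → lam i = 0)
    (hmu : ∀ i j : ℕ, i ≤ j → j < m → mu i ≤ mu j)
    (hmunonpos : ∀ i : ℕ, i < r → mu i ≤ 0)
    (hmupos : ∀ i : ℕ, r ≤ i → i < m → 0 < mu i)
    (D : Matrix (Fin m) (Fin m) ℂ)
    (hp : p = Module.finrank ℂ (LinearMap.ker D.mulVecLin))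
    (hrpk : r - p ≤ k)
    (hcond : ∀ i : ℕ, i < r - p → 0 ≤ κ ^ 2 * lam i + mu i)
    (hepsl : ∀ i : ℕ, i < r - p → -mu i / lam i ≤ eps i)
    (hepsu : ∀ i : ℕ, i < r - p → eps i ≤ κ ^ 2)
    (hepsz : ∀ j : ℕ, r - p ≤ j → j < r → eps j = 0)
    (U : Matrix (Fin n) (Fin n) ℂ) (hU : U ∈ Matrix.unitaryGroup (Fin n) ℂ)
    (V : Matrix (Fin m) (Fin m) ℂ) (hV : V ∈ Matrix.unitaryGroup (Fin m) ℂ)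
    (A : Matrix (Fin n) (Fin n) ℂ)
    (hA : A = U * Matrix.diagonal (fun i : Fin n => (lam i : ℂ)) * Uᴴ)
    (hD : D = V * Matrix.diagonal (fun j : Fin m => (mu j : ℂ)) * Vᴴ)
    (E : Matrix (Fin n) (Fin m) ℂ)
    (hE : ∀ (i : Fin n) (j : Fin m),
      E i j = if (i : ℕ) = (j : ℕ) ∧ (j : ℕ) < r then (Real.sqrt (eps j) : ℂ) else 0)
    (K : Matrix (Fin n) (Fin m) ℂ) (hK : K = U * E * Vᴴ)
    (S : Matrix (Fin n ⊕ Fin m) (Fin n ⊕ Fin m) ℂ)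
    (hS : S = Matrix.fromBlocks A (-(A * K)) (Kᴴ * A) D) :
    (∀ i : ℕ, i < r - p → 0 ≤ lam i + mu i) ∧
    ∀ η ∈ spectrum ℂ S, 0 ≤ η.re :=
  spectrum_in_right_halfplane_general n m k r p hkn κ hκ0 hκ1 lam mu eps hlampos hlamzero hmu
    hmunonpos hmupos D hp hrpk hcond hepsl hepsz U hU V hV A hA hD E hE K hK S hS
end
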